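/- arXiv:2212.06901 — 2 statements merged into one kernel-verified Lean document; each statement's English description precedes it below -/
import Mathlib

section
/- Let Γ' be a finite simple graph having a cone vertex (a vertex adjacent to every other vertex of Γ'), let Λ be any finite simple graph, and let Γ = Γ' ∗ Λ be their join (the graph on the disjoint union of the vertex sets containing all edges of Γ', all edges of Λ, and all edges between vertices of Γ' and vertices of Λ). Then BB(Γ) is isomorphic to A(Δ) for some finite simple graph Δ, i.e., BB(Γ) is a right-angled Artin group. -/
def raagRels {V : Type} (G : SimpleGraph V) : Set (FreeGroup V) :=
  {r | ∃ v w : V, G.Adj v w ∧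
    r = FreeGroup.of v * FreeGroup.of w * (FreeGroup.of v)⁻¹ * (FreeGroup.of w)⁻¹}

/-- The right-angled Artin group of a simple graph. -/
abbrev RAAG {V : Type} (G : SimpleGraph V) : Type := PresentedGroup (raagRels G)

/-- The canonical generator of `RAAG G` corresponding to a vertex. -/
def raagGen {V : Type} (G : SimpleGraph V) (v : V) : RAAG G :=
  PresentedGroup.of (rels := raagRels G) v

/-- The homomorphism `A(Γ) → ℤ` sending every vertex generator to `1`. -/
def bbgChar {V : Type} (G : SimpleGraph V) : RAAG G →* Multiplicative ℤ :=
  PresentedGroup.toGroup (f := fun _ : V => Multiplicative.ofAdd (1 : ℤ)) (by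
    rintro r ⟨v, w, -, rfl⟩
    simp only [map_mul, map_inv, FreeGroup.lift_apply_of]
    group)

/-- The Bestvina–Brady group of a simple graph, as a subgroup of the RAAG. -/
def BBG {V : Type} (G : SimpleGraph V) : Subgroup (RAAG G) := (bbgChar G).ker

/-- A group is a RAAG if it is isomorphic to the RAAG on some finite simple graph. -/
def IsRAAG (H : Type) [Group H] : Prop :=
  ∃ (W : Type) (_ : Fintype W) (Δ : SimpleGraph W), Nonempty (H ≃* RAAG Δ)

/-- The join of two graphs: all edges of both graphs, plus all edges between them. -/
def joinGraph {V W : Type} (G : SimpleGraph V) (H : SimpleGraph W) : SimpleGraph (V ⊕ W) :=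
  SimpleGraph.fromRel (fun x y =>
    (∃ a b : V, x = Sum.inl a ∧ y = Sum.inl b ∧ G.Adj a b) ∨
    (∃ a b : W, x = Sum.inr a ∧ y = Sum.inr b ∧ H.Adj a b) ∨
    (∃ (a : V) (b : W), x = Sum.inl a ∧ y = Sum.inr b))

/-! If `z` is a cone vertex of `Γ`, its generator `c` is central in `A(Γ)`. Killing `z` gives a
retraction `π : A(Γ) → A(Γ - z)` with section `ψ : u ↦ u c⁻¹`, whose image lies in `BB(Γ)`, and
every `g` factors as `ψ (π g) * c ^ χ(g)` because both sides are homomorphisms in `g` (centrality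
of `c`) that agree on generators. Hence `π` restricts to an isomorphism `BB(Γ) ≃ A(Γ - z)`.
In a join `Γ' ∗ Λ`, a cone vertex of `Γ'` is a cone vertex of the join. -/

section RAAG

variable {V : Type} {G : SimpleGraph V}

lemma commute_raagGen_of_adj {v w : V} (h : G.Adj v w) :
    Commute (raagGen G v) (raagGen G w) := by
  have hrel : PresentedGroup.mk (raagRels G)
      (FreeGroup.of v * FreeGroup.of w * (FreeGroup.of v)⁻¹ * (FreeGroup.of w)⁻¹) = 1 :=
    (QuotientGroup.eq_one_iff _).2 (Subgroup.subset_normalClosure ⟨v, w, h, rfl⟩)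
  have hcomm : raagGen G v * raagGen G w * (raagGen G v)⁻¹ * (raagGen G w)⁻¹ = 1 := by
    simpa only [map_mul, map_inv, raagGen, PresentedGroup.of] using hrel
  rwa [mul_inv_eq_one, mul_inv_eq_iff_eq_mul] at hcomm

lemma raagHom_ext {H : Type} [Group H] {φ ψ : RAAG G →* H}
    (h : ∀ v, φ (raagGen G v) = ψ (raagGen G v)) : φ = ψ :=
  PresentedGroup.ext h

def raagLift {H : Type} [Group H] (f : V → H) (hf : ∀ v w, G.Adj v w → Commute (f v) (f w)) :
    RAAG G →* H :=
  PresentedGroup.toGroup (f := f) (by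
    rintro r ⟨v, w, hvw, rfl⟩
    simp only [map_mul, map_inv, FreeGroup.lift_apply_of, (hf v w hvw).eq]
    group)

@[simp]
lemma raagLift_raagGen {H : Type} [Group H] (f : V → H)
    (hf : ∀ v w, G.Adj v w → Commute (f v) (f w)) (v : V) :
    raagLift f hf (raagGen G v) = f v :=
  PresentedGroup.toGroup.of _

@[simp]
lemma bbgChar_raagGen (v : V) : bbgChar G (raagGen G v) = Multiplicative.ofAdd (1 : ℤ) :=
  PresentedGroup.toGroup.of _

end RAAG

noncomputable section ConeVertex

variable {V : Type} {G : SimpleGraph V} {z : V}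

lemma commute_raagGen_of_isCone (hz : ∀ x, x ≠ z → G.Adj z x) (g : RAAG G) :
    Commute (raagGen G z) g := by
  suffices g ∈ Subgroup.centralizer {raagGen G z} from
    (Subgroup.mem_centralizer_singleton_iff.1 this).symm
  refine PresentedGroup.generated_by _ _ (fun x => ?_) g
  rw [Subgroup.mem_centralizer_singleton_iff]
  by_cases hx : x = z
  · subst hx; rfl
  · exact (commute_raagGen_of_adj (hz x hx)).eq.symm

open Classical in
variable (G z) in
def deleteVertexProj : RAAG G →* RAAG (G.induce {z}ᶜ) :=
  raagLift (fun x => if h : x = z then 1 else raagGen _ ⟨x, h⟩) (by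
    intro x y hxy
    by_cases hx : x = z
    · simp only [dif_pos hx, Commute.one_left]
    by_cases hy : y = z
    · simp only [dif_pos hy, Commute.one_right]
    simp only [dif_neg hx, dif_neg hy]
    exact commute_raagGen_of_adj (G := G.induce {z}ᶜ) (v := ⟨x, hx⟩) (w := ⟨y, hy⟩) hxy)

lemma deleteVertexProj_raagGen_self : deleteVertexProj G z (raagGen G z) = 1 := by
  simp [deleteVertexProj]

lemma deleteVertexProj_raagGen_of_ne {x : V} (hx : x ≠ z) :
    deleteVertexProj G z (raagGen G x) = raagGen _ ⟨x, hx⟩ := by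
  simp [deleteVertexProj, hx]

def coneSection (hz : ∀ x, x ≠ z → G.Adj z x) : RAAG (G.induce {z}ᶜ) →* RAAG G :=
  raagLift (fun u => raagGen G u * (raagGen G z)⁻¹) (fun _ _ huw =>
    ((commute_raagGen_of_adj (G := G) huw).mul_right
        (commute_raagGen_of_isCone hz _).symm.inv_right).mul_left
      ((commute_raagGen_of_isCone hz _).inv_left.mul_right (Commute.refl _)))

lemma coneSection_raagGen (hz : ∀ x, x ≠ z → G.Adj z x) (u : ({z}ᶜ : Set V)) :
    coneSection hz (raagGen _ u) = raagGen G u * (raagGen G z)⁻¹ :=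
  raagLift_raagGen _ _ u

lemma bbgChar_coneSection (hz : ∀ x, x ≠ z → G.Adj z x) (h : RAAG (G.induce {z}ᶜ)) :
    bbgChar G (coneSection hz h) = 1 := by
  suffices (bbgChar G).comp (coneSection hz) = 1 from DFunLike.congr_fun this h
  refine raagHom_ext fun u => ?_
  simp [coneSection_raagGen]

lemma deleteVertexProj_coneSection (hz : ∀ x, x ≠ z → G.Adj z x) (h : RAAG (G.induce {z}ᶜ)) :
    deleteVertexProj G z (coneSection hz h) = h := by
  suffices (deleteVertexProj G z).comp (coneSection hz) = .id _ from DFunLike.congr_fun this h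
  refine raagHom_ext fun u => ?_
  simp [coneSection_raagGen, deleteVertexProj_raagGen_self, deleteVertexProj_raagGen_of_ne u.2]

lemma coneSection_deleteVertexProj_mul_zpow (hz : ∀ x, x ≠ z → G.Adj z x) (g : RAAG G) :
    coneSection hz (deleteVertexProj G z g) * raagGen G z ^ (bbgChar G g).toAdd = g := by
  let θ : RAAG G →* RAAG G :=
    ((coneSection hz).noncommCoprod (zpowersHom _ (raagGen G z))
        (fun _ _ => by
          rw [zpowersHom_apply]
          exact ((commute_raagGen_of_isCone hz _).zpow_left _).symm)).comp
      ((deleteVertexProj G z).prod (bbgChar G))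
  suffices θ = .id _ from DFunLike.congr_fun this g
  refine raagHom_ext fun x => ?_
  by_cases hx : x = z
  · subst hx
    simp [θ, deleteVertexProj_raagGen_self]
  · simp [θ, deleteVertexProj_raagGen_of_ne hx, coneSection_raagGen]

def bbgEquivOfCone (hz : ∀ x, x ≠ z → G.Adj z x) : BBG G ≃* RAAG (G.induce {z}ᶜ) where
  toFun g := deleteVertexProj G z g
  invFun h := ⟨coneSection hz h, bbgChar_coneSection hz h⟩
  left_inv := by
    rintro ⟨g, hg⟩
    apply Subtype.ext
    have hχ : bbgChar G g = 1 := hg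
    simpa [hχ] using coneSection_deleteVertexProj_mul_zpow hz g
  right_inv := deleteVertexProj_coneSection hz
  map_mul' a b := map_mul _ (a : RAAG G) b

lemma isRAAG_bbg_of_isCone [Fintype V] (hz : ∀ x, x ≠ z → G.Adj z x) : IsRAAG (BBG G) := by
  classical
  exact ⟨_, inferInstance, G.induce {z}ᶜ, ⟨bbgEquivOfCone hz⟩⟩

end ConeVertex

lemma joinGraph_adj_inl_of_isCone {V W : Type} {G : SimpleGraph V} (H : SimpleGraph W) {v : V}
    (hv : ∀ w, w ≠ v → G.Adj v w) (x : V ⊕ W) (hx : x ≠ .inl v) :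
    (joinGraph G H).Adj (.inl v) x := by
  refine (SimpleGraph.fromRel_adj _ _ _).2 ⟨hx.symm, .inl ?_⟩
  cases x with
  | inl a => exact .inl ⟨v, a, rfl, rfl, hv a (fun h => hx (h ▸ rfl))⟩
  | inr b => exact .inr (.inr ⟨v, b, rfl, rfl⟩)

/-- If `Γ'` has a cone vertex, then the Bestvina–Brady group of the join `Γ' ∗ Λ`
is a RAAG. -/
theorem stmt_5 {V W : Type} [Fintype V] [Fintype W] (G' : SimpleGraph V) (Λ : SimpleGraph W)
    (hcone : ∃ v : V, ∀ w : V, w ≠ v → G'.Adj v w) :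
    IsRAAG ↥(BBG (joinGraph G' Λ)) := by
  obtain ⟨v, hv⟩ := hcone
  exact isRAAG_bbg_of_isCone (joinGraph_adj_inl_of_isCone Λ hv)
end

section
/- Let Γ be a finite simple graph. If the center of the right-angled Artin group A(Γ) is nontrivial, then BB(Γ) is isomorphic to A(Δ) for some finite simple graph Δ, i.e., BB(Γ) is a right-angled Artin group. -/
/-!
If no vertex of `Γ` is adjacent to all others, every vertex `v` has a non-neighbour, so
`A(Γ) = A(st v) *_{A(lk v)} A(Γ - v)` is an amalgam in which both factors are strictly larger than
the amalgamated subgroup. The centre of such an amalgam lies in the amalgamated subgroup, so a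
central element of `A(Γ)` is fixed by the retraction `A(Γ) → A(Γ - v)` for every `v`, hence trivial.

So a nontrivial centre gives a cone vertex `v`. Then `v` is central, `A(Γ) = A(Γ - v) · ⟨v⟩`, and
since `χ(v) = 1` the projection `A(Γ) → A(Γ - v)` killing `v` restricts to an isomorphism
`BB(Γ) ≅ A(Γ - v)`.
-/

namespace Monoid.PushoutI

variable {ι H : Type*} {G : ι → Type*} [Group H] [∀ i, Group (G i)] {φ : ∀ i, H →* G i}

namespace NormalWord

variable {d : Transversal φ}

lemma letter_notMem_range (w : NormalWord d) {l : Σ i, G i} (hl : l ∈ w.toList) :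
    l.2 ∉ (φ l.1).range := fun hr => w.ne_one l hl <| by
  rw [← (d.compl l.1).equiv_snd_eq_self_iff_mem (one_mem _) |>.2 (w.normalized l.1 l.2 hl)]
  exact ((d.compl l.1).coe_equiv_snd_eq_one_iff_mem (d.one_mem l.1)).2 hr

variable [DecidableEq ι] [∀ i, DecidableEq (G i)]

lemma fstIdx_of_smul {i : ι} {g : G i} (hg : g ∉ (φ i).range) {w : NormalWord d}
    (hw : w.fstIdx ≠ some i) : (of (φ := φ) i g • w).fstIdx = some i := by
  rw [← cons_eq_smul g w hw hg]
  simp [cons, CoprodI.Word.cons, CoprodI.Word.fstIdx]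

lemma fstIdx_prod_smul_of_smul_empty {j : ι} {a : G j} (ha : a ∉ (φ j).range)
    (L : List (Σ i, G i)) (ℓ : Σ i, G i) (hchain : (ℓ :: L).IsChain (·.1 ≠ ·.1))
    (hred : ∀ l ∈ ℓ :: L, l.2 ∉ (φ l.1).range) (hne : ℓ.1 ≠ j ∨ L ≠ []) :
    (((ℓ :: L).map fun l => of (φ := φ) l.1 l.2).prod •
      of (φ := φ) j a • (empty : NormalWord d)).fstIdx = some ℓ.1 := by
  have hempty : (empty : NormalWord d).fstIdx ≠ some j := by
    simp [CoprodI.Word.fstIdx]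
  induction L generalizing ℓ with
  | nil =>
    have hℓ : ℓ.2 ∉ (φ ℓ.1).range := hred ℓ List.mem_cons_self
    have hj : ℓ.1 ≠ j := hne.resolve_right (by simp)
    simp only [List.map_cons, List.map_nil, List.prod_cons, List.prod_nil, mul_one]
    exact fstIdx_of_smul hℓ (by rw [fstIdx_of_smul ha hempty]; simpa [eq_comm] using hj)
  | cons m L ih =>
    have hℓ : ℓ.2 ∉ (φ ℓ.1).range := hred ℓ List.mem_cons_self
    have hℓm : ℓ.1 ≠ m.1 := (List.isChain_cons_cons.1 hchain).1
    rw [List.map_cons, List.prod_cons, mul_smul]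
    refine fstIdx_of_smul hℓ ?_
    by_cases hm : m.1 ≠ j ∨ L ≠ []
    · rw [ih m (List.isChain_cons_cons.1 hchain).2 (fun l hl => hred l (.tail _ hl)) hm]
      simpa [eq_comm] using hℓm
    obtain ⟨j', g⟩ := m
    push Not at hm
    obtain ⟨rfl, rfl⟩ := hm
    simp only [List.map_cons, List.map_nil, List.prod_cons, List.prod_nil, mul_one]
    rw [← mul_smul, ← map_mul]
    by_cases hga : g * a ∈ (φ j').range
    · obtain ⟨t, ht⟩ := hga
      rw [← ht, of_apply_eq_base, base_smul_def]
      simp [CoprodI.Word.fstIdx]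
    · rw [fstIdx_of_smul hga hempty]
      simpa [eq_comm] using hℓm

end NormalWord

open NormalWord in
theorem center_le_range_base (hφ : ∀ i, Function.Injective (φ i))
    (hproper : ∀ i, ∃ j ≠ i, ∃ a : G j, a ∉ (φ j).range) :
    Subgroup.center (PushoutI φ) ≤ (base φ).range := by
  classical
  intro z hz
  obtain ⟨d⟩ := transversal_nonempty φ hφ
  by_contra hzr
  set w : NormalWord d := z • empty with hw
  have hz_eq : base φ w.head * (w.toList.map fun l => of (φ := φ) l.1 l.2).prod = z := by
    rw [show z = w.prod by simp [hw]]
    simp [NormalWord.prod, CoprodI.Word.prod, map_list_prod, Function.comp_def]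
  obtain ⟨ℓ, L, hwL⟩ : ∃ ℓ L, w.toList = ℓ :: L :=
    List.exists_cons_of_ne_nil fun hnil => hzr ⟨w.head, by simpa [hnil] using hz_eq⟩
  -- the normal form of `a * z` starts in the factor of `a`, that of `z * a` in the factor of the
  -- first letter of `z`
  obtain ⟨j, hj, a, ha⟩ := hproper ℓ.1
  have hleft : ((of (φ := φ) j a * z) • empty (d := d)).fstIdx = some j := by
    rw [mul_smul, ← hw]
    refine fstIdx_of_smul ha ?_
    simp [CoprodI.Word.fstIdx, hwL, hj.symm]
  have hright : ((z * of (φ := φ) j a) • empty (d := d)).fstIdx = some ℓ.1 := by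
    rw [← hz_eq, mul_smul, mul_smul, base_smul_def]
    change (_ • _ : NormalWord d).fstIdx = _
    rw [hwL]
    exact fstIdx_prod_smul_of_smul_empty ha L ℓ (hwL ▸ w.chain_ne)
      (hwL ▸ fun l hl => w.letter_notMem_range hl) (Or.inl hj.symm)
  rw [← Subgroup.mem_center_iff.1 hz, hleft] at hright
  exact hj (Option.some.inj hright)

end Monoid.PushoutI

open scoped Classical

namespace RAAG

section Basic

variable {V : Type} {G : SimpleGraph V} {K : Type*} [Group K]

def lift (f : V → K) (hf : ∀ v w, G.Adj v w → Commute (f v) (f w)) : RAAG G →* K :=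
  PresentedGroup.toGroup (f := f) (by
    rintro r ⟨v, w, hvw, rfl⟩
    simp [(hf v w hvw).eq])

@[simp]
lemma lift_gen (f : V → K) (hf : ∀ v w, G.Adj v w → Commute (f v) (f w)) (v : V) :
    lift f hf (raagGen G v) = f v :=
  PresentedGroup.toGroup.of _

@[ext]
lemma hom_ext {φ ψ : RAAG G →* K} (h : ∀ v, φ (raagGen G v) = ψ (raagGen G v)) : φ = ψ :=
  PresentedGroup.ext h

lemma commute_gen {v w : V} (h : G.Adj v w) : Commute (raagGen G v) (raagGen G w) :=
  commutatorElement_eq_one_iff_commute.1 (PresentedGroup.one_of_mem ⟨v, w, h, rfl⟩)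

lemma gen_mem_center {v : V} (hv : ∀ w, w ≠ v → G.Adj v w) :
    raagGen G v ∈ Subgroup.center (RAAG G) := by
  refine Set.singleton_subset_iff.1 (Subgroup.centralizer_eq_top_iff_subset.1 (eq_top_iff.2 ?_))
  rw [← PresentedGroup.closure_range_of, Subgroup.closure_le]
  rintro _ ⟨w, rfl⟩
  rw [SetLike.mem_coe, Subgroup.mem_centralizer_singleton_iff]
  obtain rfl | hw := eq_or_ne w v
  · rfl
  · exact (commute_gen (hv w hw)).eq.symm

@[simp]
lemma bbgChar_gen (v : V) : bbgChar G (raagGen G v) = Multiplicative.ofAdd 1 :=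
  PresentedGroup.toGroup.of _

@[simp]
lemma bbgChar_gen_zpow (v : V) (n : ℤ) :
    bbgChar G (raagGen G v ^ n) = Multiplicative.ofAdd n := by
  simp [← ofAdd_zsmul]

end Basic

section Induced

variable {V : Type} (G : SimpleGraph V)

def ofInduce (S : Set V) : RAAG (G.induce S) →* RAAG G :=
  lift (fun u => raagGen G u) fun _ _ h => commute_gen h

noncomputable def toInduce (S : Set V) : RAAG G →* RAAG (G.induce S) :=
  lift (fun v => if h : v ∈ S then raagGen _ ⟨v, h⟩ else 1) fun v w hvw => by
    by_cases hv : v ∈ S <;> by_cases hw : w ∈ S <;> simp only [hv, hw, dite_true, dite_false,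
      Commute.one_left, Commute.one_right]
    exact commute_gen hvw

def induceInclusion {S T : Set V} (h : S ⊆ T) : RAAG (G.induce S) →* RAAG (G.induce T) :=
  lift (fun u => raagGen _ ⟨u, h u.2⟩) fun _ _ huw => commute_gen huw

@[simp]
lemma ofInduce_gen (S : Set V) (u : S) : ofInduce G S (raagGen _ u) = raagGen G u :=
  lift_gen ..

@[simp]
lemma toInduce_gen (S : Set V) (v : V) :
    toInduce G S (raagGen G v) = if h : v ∈ S then raagGen _ ⟨v, h⟩ else 1 :=
  lift_gen ..

@[simp]
lemma induceInclusion_gen {S T : Set V} (h : S ⊆ T) (u : S) :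
    induceInclusion G h (raagGen _ u) = raagGen _ ⟨u, h u.2⟩ :=
  lift_gen ..

@[simp]
lemma toInduce_ofInduce (S : Set V) (a : RAAG (G.induce S)) :
    toInduce G S (ofInduce G S a) = a := by
  change ((toInduce G S).comp (ofInduce G S)) a = MonoidHom.id _ a
  congr 1
  ext u
  simp

lemma ofInduce_injective (S : Set V) : Function.Injective (ofInduce G S) :=
  Function.LeftInverse.injective (toInduce_ofInduce G S)

lemma ofInduce_comp_induceInclusion {S T : Set V} (h : S ⊆ T) :
    (ofInduce G T).comp (induceInclusion G h) = ofInduce G S := by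
  ext u
  simp

lemma induceInclusion_injective {S T : Set V} (h : S ⊆ T) :
    Function.Injective (induceInclusion G h) := by
  refine Function.Injective.of_comp (f := ofInduce G T) ?_
  rw [← MonoidHom.coe_comp, ofInduce_comp_induceInclusion]
  exact ofInduce_injective G S

lemma gen_notMem_range_induceInclusion {S T : Set V} (h : S ⊆ T) {u : V} (huT : u ∈ T)
    (huS : u ∉ S) : raagGen (G.induce T) ⟨u, huT⟩ ∉ (induceInclusion G h).range := by
  -- the exponent sum of `u` vanishes on the image of `RAAG (G.induce S)`
  let count : RAAG (G.induce T) →* Multiplicative ℤ :=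
    lift (fun x => if x.1 = u then Multiplicative.ofAdd 1 else 1) fun _ _ _ => Commute.all _ _
  have hcount : count.comp (induceInclusion G h) = 1 := by
    ext x
    have : x.1 ≠ u := fun hx => huS (hx ▸ x.2)
    simp [count, this]
  rintro ⟨y, hy⟩
  have := DFunLike.congr_fun hcount y
  simp [hy, count] at this

noncomputable def retraction (S : Set V) : RAAG G →* RAAG G := (ofInduce G S).comp (toInduce G S)

@[simp]
lemma retraction_gen (S : Set V) (v : V) :
    retraction G S (raagGen G v) = if v ∈ S then raagGen G v else 1 := by
  by_cases h : v ∈ S <;> simp [retraction, h]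

lemma retraction_ofInduce {S T : Set V} (h : S ⊆ T) (a : RAAG (G.induce S)) :
    retraction G T (ofInduce G S a) = ofInduce G S a := by
  change ((retraction G T).comp (ofInduce G S)) a = _
  congr 1
  ext u
  simp [h u.2]

lemma retraction_comp_retraction (S T : Set V) :
    (retraction G S).comp (retraction G T) = retraction G (S ∩ T) := by
  ext v
  by_cases hS : v ∈ S <;> by_cases hT : v ∈ T <;> simp [hS, hT]

lemma retraction_univ : retraction G Set.univ = MonoidHom.id _ := by
  ext v
  simp

lemma retraction_empty : retraction G ∅ = 1 := by
  ext v
  simp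

lemma eq_one_of_forall_retraction_compl_singleton [Finite V] {z : RAAG G}
    (hz : ∀ v, retraction G {v}ᶜ z = z) : z = 1 := by
  have := Fintype.ofFinite V
  have key (T : Finset V) : retraction G (↑T)ᶜ z = z := by
    induction T using Finset.induction with
    | empty => simp [retraction_univ]
    | @insert v T _ ih =>
      rw [Finset.coe_insert, Set.insert_eq, Set.compl_union, ← retraction_comp_retraction,
        MonoidHom.comp_apply, ih, hz]
  simpa [retraction_empty] using (key Finset.univ).symm

end Induced

section StarSplitting

open Monoid

variable {V : Type} (G : SimpleGraph V) (v : V)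

/-- The vertex sets of the splitting `A(Γ) = A(st v) *_{A(lk v)} A(Γ - v)`. -/
def starFactor : Bool → Set V
  | true => insert v (G.neighborSet v)
  | false => {v}ᶜ

lemma neighborSet_subset_starFactor : ∀ b, G.neighborSet v ⊆ starFactor G v b
  | true => Set.subset_insert _ _
  | false => fun _ h => (G.ne_of_adj h).symm

def linkInclusion (b : Bool) :
    RAAG (G.induce (G.neighborSet v)) →* RAAG (G.induce (starFactor G v b)) :=
  induceInclusion G (neighborSet_subset_starFactor G v b)

noncomputable def ofStarAmalgam : PushoutI (linkInclusion G v) →* RAAG G :=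
  PushoutI.lift (fun _ => ofInduce G _) (ofInduce G _)
    fun b => ofInduce_comp_induceInclusion G (neighborSet_subset_starFactor G v b)

@[simp]
lemma ofStarAmalgam_of (b : Bool) (x : RAAG (G.induce (starFactor G v b))) :
    ofStarAmalgam G v (PushoutI.of b x) = ofInduce G _ x :=
  PushoutI.lift_of _ _ _ _

@[simp]
lemma ofStarAmalgam_base (x : RAAG (G.induce (G.neighborSet v))) :
    ofStarAmalgam G v (PushoutI.base _ x) = ofInduce G _ x :=
  PushoutI.lift_base _ _ _ _

variable {G v} in
lemma of_gen_eq_base_gen {u : V} (hu : G.Adj v u) (b : Bool) :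
    PushoutI.of (φ := linkInclusion G v) b
        (raagGen _ ⟨u, neighborSet_subset_starFactor G v b hu⟩) =
      PushoutI.base (linkInclusion G v) (raagGen _ ⟨u, hu⟩) := by
  rw [← PushoutI.of_apply_eq_base _ b, linkInclusion, induceInclusion_gen]

noncomputable def toStarAmalgam : RAAG G →* PushoutI (linkInclusion G v) :=
  lift (fun u => if h : u = v then PushoutI.of true (raagGen _ ⟨u, .inl h⟩)
    else PushoutI.of false (raagGen _ ⟨u, h⟩)) fun x y hxy => by
    obtain rfl | hx := eq_or_ne x v
    · rw [dif_pos rfl, dif_neg hxy.ne.symm, of_gen_eq_base_gen hxy false,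
        ← of_gen_eq_base_gen hxy true]
      exact (commute_gen (by exact hxy)).map _
    obtain rfl | hy := eq_or_ne y v
    · rw [dif_neg hx, dif_pos rfl, of_gen_eq_base_gen hxy.symm false,
        ← of_gen_eq_base_gen hxy.symm true]
      exact (commute_gen (by exact hxy)).map _
    rw [dif_neg hx, dif_neg hy]
    exact (commute_gen (by exact hxy)).map _

lemma ofStarAmalgam_comp_toStarAmalgam :
    (ofStarAmalgam G v).comp (toStarAmalgam G v) = MonoidHom.id _ := by
  ext u
  by_cases h : u = v <;> simp [toStarAmalgam, h]

lemma toStarAmalgam_comp_ofStarAmalgam :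
    (toStarAmalgam G v).comp (ofStarAmalgam G v) = MonoidHom.id _ := by
  refine PushoutI.hom_ext_nonempty fun b => ?_
  ext ⟨u, hu⟩
  simp only [MonoidHom.comp_apply, ofStarAmalgam_of, ofInduce_gen, toStarAmalgam, lift_gen,
    MonoidHom.id_apply]
  cases b with
  | false => exact dif_neg hu
  | true =>
    obtain rfl | hadj := hu
    · rw [dif_pos rfl]
    · rw [dif_neg (G.ne_of_adj hadj).symm, of_gen_eq_base_gen hadj, of_gen_eq_base_gen hadj]

variable {G v} in
lemma retraction_compl_singleton_of_mem_center {w : V} (hw : w ≠ v) (hvw : ¬G.Adj v w)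
    {z : RAAG G} (hz : z ∈ Subgroup.center (RAAG G)) : retraction G {v}ᶜ z = z := by
  have hproper : ∀ b, ∃ c ≠ b, ∃ a, a ∉ (linkInclusion G v c).range
    | true => ⟨false, by decide, raagGen _ ⟨w, hw⟩,
        gen_notMem_range_induceInclusion G _ hw hvw⟩
    | false => ⟨true, by decide, raagGen _ ⟨v, Set.mem_insert _ _⟩,
        gen_notMem_range_induceInclusion G _ _ (G.notMem_neighborSet_self)⟩
  have hcenter : toStarAmalgam G v z ∈ Subgroup.center _ := by
    refine Subgroup.mem_center_iff.2 fun g => ?_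
    rw [← MonoidHom.id_apply _ g, ← toStarAmalgam_comp_ofStarAmalgam, MonoidHom.comp_apply,
      ← map_mul, ← map_mul, Subgroup.mem_center_iff.1 hz]
  obtain ⟨y, hy⟩ := PushoutI.center_le_range_base (φ := linkInclusion G v)
    (fun b => induceInclusion_injective G _) hproper hcenter
  have hzy : ofInduce G _ y = z := by
    rw [← ofStarAmalgam_base, hy, ← MonoidHom.comp_apply, ofStarAmalgam_comp_toStarAmalgam,
      MonoidHom.id_apply]
  rw [← hzy]
  exact retraction_ofInduce G (neighborSet_subset_starFactor G v false) y

theorem exists_forall_adj_of_center_ne_bot [Finite V] (h : Subgroup.center (RAAG G) ≠ ⊥) :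
    ∃ v, ∀ w, w ≠ v → G.Adj v w := by
  by_contra! hcone
  refine h (eq_bot_iff.2 fun z hz => ?_)
  refine eq_one_of_forall_retraction_compl_singleton G fun v => ?_
  obtain ⟨w, hw, hvw⟩ := hcone v
  exact retraction_compl_singleton_of_mem_center hw hvw hz

end StarSplitting

section Cone

variable {V : Type} {G : SimpleGraph V} {v : V}

lemma range_ofInduce_sup_zpowers_eq_top (G : SimpleGraph V) (v : V) :
    (ofInduce G {v}ᶜ).range ⊔ Subgroup.zpowers (raagGen G v) = ⊤ := by
  rw [eq_top_iff, ← PresentedGroup.closure_range_of, Subgroup.closure_le]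
  rintro _ ⟨u, rfl⟩
  by_cases h : u = v
  · subst h
    exact Subgroup.mem_sup_right (Subgroup.mem_zpowers _)
  · exact Subgroup.mem_sup_left ⟨raagGen _ ⟨u, h⟩, ofInduce_gen ..⟩

lemma exists_ofInduce_mul_zpow_eq (hv : ∀ w, w ≠ v → G.Adj v w) (x : RAAG G) :
    ∃ a, ∃ n : ℤ, ofInduce G {v}ᶜ a * raagGen G v ^ n = x := by
  have : (Subgroup.zpowers (raagGen G v)).Normal := ⟨fun y hy g => by
    rwa [Subgroup.mem_center_iff.1 (Subgroup.zpowers_le.2 (gen_mem_center hv) hy) g,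
      mul_inv_cancel_right]⟩
  obtain ⟨_, ⟨a, rfl⟩, _, ⟨n, rfl⟩, hx⟩ := Subgroup.mem_sup_of_normal_right.1
    (range_ofInduce_sup_zpowers_eq_top G v ▸ Subgroup.mem_top x)
  exact ⟨a, n, hx⟩

lemma toInduce_comp_subtype_bijective (hv : ∀ w, w ≠ v → G.Adj v w) :
    Function.Bijective ((toInduce G {v}ᶜ).comp (BBG G).subtype) := by
  constructor
  · refine (injective_iff_map_eq_one _).2 fun ⟨x, hx⟩ hx1 => ?_
    obtain ⟨a, n, rfl⟩ := exists_ofInduce_mul_zpow_eq hv x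
    obtain rfl : a = 1 := by simpa using hx1
    obtain rfl : n = 0 := by simpa [BBG] using hx
    simp
  · intro a
    let n := (bbgChar G (ofInduce G {v}ᶜ a)).toAdd
    refine ⟨⟨ofInduce G {v}ᶜ a * raagGen G v ^ (-n), ?_⟩, ?_⟩
    · simp [BBG, n]
    · simp

end Cone

end RAAG

/-- If the RAAG on `Γ` has nontrivial center, then the Bestvina–Brady group of `Γ`
is a RAAG. -/
theorem stmt_6 {V : Type} [Fintype V] (G : SimpleGraph V)
    (h : Subgroup.center (RAAG G) ≠ ⊥) :
    IsRAAG ↥(BBG G) := by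
  obtain ⟨v, hv⟩ := RAAG.exists_forall_adj_of_center_ne_bot G h
  exact ⟨_, Fintype.ofFinite _, _,
    ⟨MulEquiv.ofBijective _ (RAAG.toInduce_comp_subtype_bijective hv)⟩⟩
end
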